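/- arXiv:2501.11928 — 3 statements merged into one kernel-verified Lean document; each statement's English description precedes it below -/
import Mathlib

section
/- Let 0<p<∞ and let c∈ℝ\{0}. If A = cI₂ (c times the 2×2 identity matrix), then the lacunary circular maximal operator 𝓔¹_A is unbounded on L^p(ℝ³): for every constant C>0 there exists f∈L^p(ℝ³) with ‖𝓔¹_A f‖_{L^p(ℝ³)} > C‖f‖_{L^p(ℝ³)}. -/
open MeasureTheory Real
open scoped ENNReal NNReal

noncomputable section

/-- The `L^p(μ)` norm of an `ℝ≥0∞`-valued function (essential sup when `p = ∞`). -/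
def lpNormE {α : Type*} [MeasurableSpace α] (g : α → ℝ≥0∞) (p : ℝ≥0∞)
    (μ : Measure α) : ℝ≥0∞ :=
  if p = ∞ then essSup g μ else (∫⁻ x, g x ^ p.toReal ∂μ) ^ (1 / p.toReal)

/-- The elliptic average `E^A_{t₁,t₂} f`. -/
def ellipAvg (A : Matrix (Fin 2) (Fin 2) ℝ) (t₁ t₂ : ℝ) (f : ℝ × ℝ × ℝ → ℂ)
    (x : ℝ × ℝ × ℝ) : ℂ :=
  ∫ θ in (0:ℝ)..(2 * π),
    f (x.1 - t₁ * Real.cos θ, x.2.1 - t₂ * Real.sin θ,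
       x.2.2 - (x.1 * (A 0 0 * (t₁ * Real.cos θ) + A 0 1 * (t₂ * Real.sin θ))
              + x.2.1 * (A 1 0 * (t₁ * Real.cos θ) + A 1 1 * (t₂ * Real.sin θ))))

/-- The lacunary circular maximal operator `𝓔¹_A`. -/
def circMax (A : Matrix (Fin 2) (Fin 2) ℝ) (f : ℝ × ℝ × ℝ → ℂ) (x : ℝ × ℝ × ℝ) : ℝ≥0∞ :=
  ⨆ k : ℤ, (‖ellipAvg A ((2:ℝ)^k) ((2:ℝ)^k) f x‖₊ : ℝ≥0∞)

/-- The lacunary elliptic maximal operator `𝓔²_A`. -/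
def ellipMax (A : Matrix (Fin 2) (Fin 2) ℝ) (f : ℝ × ℝ × ℝ → ℂ) (x : ℝ × ℝ × ℝ) : ℝ≥0∞ :=
  ⨆ K : ℤ × ℤ, (‖ellipAvg A ((2:ℝ)^K.1) ((2:ℝ)^K.2) f x‖₊ : ℝ≥0∞)

section AuxLemmas
open Set


lemma mea2 (w : ℝ → ℝ) (hw : Measurable w) (a b δ : ℝ) :
    MeasurableSet {z : ℝ × ℝ | z.1 ∈ Icc a b ∧ z.2 - w z.1 ∈ Ioo (-δ) δ} := by
  have h1 : {z : ℝ × ℝ | z.1 ∈ Icc a b ∧ z.2 - w z.1 ∈ Ioo (-δ) δ}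
      = (Prod.fst ⁻¹' Icc a b) ∩ ((fun z : ℝ × ℝ => z.2 - w z.1) ⁻¹' Ioo (-δ) δ) := rfl
  rw [h1]
  exact (measurable_fst measurableSet_Icc).inter
    ((measurable_snd.sub (hw.comp measurable_fst)) measurableSet_Ioo)

lemma vol2 (w : ℝ → ℝ) (hw : Measurable w) (a b δ : ℝ) :
    volume {z : ℝ × ℝ | z.1 ∈ Icc a b ∧ z.2 - w z.1 ∈ Ioo (-δ) δ}
      = ENNReal.ofReal (b - a) * ENNReal.ofReal (2 * δ) := by
  rw [Measure.volume_eq_prod, Measure.prod_apply (mea2 w hw a b δ)]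
  have hfib : ∀ y : ℝ,
      (Prod.mk y ⁻¹' {z : ℝ × ℝ | z.1 ∈ Icc a b ∧ z.2 - w z.1 ∈ Ioo (-δ) δ})
      = if y ∈ Icc a b then Ioo (w y - δ) (w y + δ) else ∅ := by
    intro y
    by_cases hy : y ∈ Icc a b
    · simp only [hy, if_true]
      ext t
      simp only [mem_preimage, mem_setOf_eq, mem_Ioo, hy, true_and]
      constructor
      · rintro ⟨h1, h2⟩; exact ⟨by linarith, by linarith⟩
      · rintro ⟨h1, h2⟩; exact ⟨by linarith, by linarith⟩
    · simp only [hy, if_false]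
      ext t
      simp only [mem_preimage, mem_setOf_eq, mem_empty_iff_false, iff_false, not_and]
      intro h1
      exact absurd h1 hy
  simp_rw [hfib]
  have h2 : ∀ y : ℝ, volume (if y ∈ Icc a b then Ioo (w y - δ) (w y + δ) else (∅ : Set ℝ))
      = (Icc a b).indicator (fun _ => ENNReal.ofReal (2*δ)) y := by
    intro y
    by_cases hy : y ∈ Icc a b
    · rw [if_pos hy, indicator_of_mem hy, Real.volume_Ioo]
      congr 1; ring
    · rw [if_neg hy, indicator_of_notMem hy, measure_empty]
  simp_rw [h2]
  rw [lintegral_indicator measurableSet_Icc _, setLIntegral_const, Real.volume_Icc]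
  rw [mul_comm]

lemma mea3 (m : ℝ × ℝ → ℝ) (hm : Measurable m) (a b δ : ℝ) :
    MeasurableSet {y : ℝ × ℝ × ℝ | y.1 ∈ Icc a b ∧ y.2.1 ∈ Icc a b ∧
      y.2.2 - m (y.1, y.2.1) ∈ Ioo (-δ) δ} := by
  have h1 : {y : ℝ × ℝ × ℝ | y.1 ∈ Icc a b ∧ y.2.1 ∈ Icc a b ∧
        y.2.2 - m (y.1, y.2.1) ∈ Ioo (-δ) δ}
      = (Prod.fst ⁻¹' Icc a b) ∩ (((fun y : ℝ × ℝ × ℝ => y.2.1) ⁻¹' Icc a b)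
          ∩ ((fun y : ℝ × ℝ × ℝ => y.2.2 - m (y.1, y.2.1)) ⁻¹' Ioo (-δ) δ)) := rfl
  rw [h1]
  have hm2 : Measurable fun y : ℝ × ℝ × ℝ => y.2.2 - m (y.1, y.2.1) :=
    measurable_snd.snd.sub (hm.comp (measurable_fst.prodMk measurable_snd.fst))
  exact (measurable_fst measurableSet_Icc).inter
    ((measurable_snd.fst measurableSet_Icc).inter (hm2 measurableSet_Ioo))

lemma vol3 (m : ℝ × ℝ → ℝ) (hm : Measurable m) (a b δ : ℝ) :
    volume {y : ℝ × ℝ × ℝ | y.1 ∈ Icc a b ∧ y.2.1 ∈ Icc a b ∧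
      y.2.2 - m (y.1, y.2.1) ∈ Ioo (-δ) δ}
      = ENNReal.ofReal (b - a) * (ENNReal.ofReal (b - a) * ENNReal.ofReal (2 * δ)) := by
  rw [Measure.volume_eq_prod, Measure.prod_apply (mea3 m hm a b δ)]
  have hfib : ∀ y₁ : ℝ,
      (Prod.mk y₁ ⁻¹' {y : ℝ × ℝ × ℝ | y.1 ∈ Icc a b ∧ y.2.1 ∈ Icc a b ∧
        y.2.2 - m (y.1, y.2.1) ∈ Ioo (-δ) δ})
      = if y₁ ∈ Icc a b then
          {z : ℝ × ℝ | z.1 ∈ Icc a b ∧ z.2 - (fun s => m (y₁, s)) z.1 ∈ Ioo (-δ) δ}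
        else ∅ := by
    intro y₁
    by_cases hy : y₁ ∈ Icc a b
    · simp only [hy, if_true]
      ext z
      simp only [mem_preimage, mem_setOf_eq, hy, true_and]
    · simp only [hy, if_false]
      ext z
      simp only [mem_preimage, mem_setOf_eq, mem_empty_iff_false, iff_false, not_and]
      intro h1
      exact absurd h1 hy
  simp_rw [hfib]
  have h2 : ∀ y₁ : ℝ, volume (if y₁ ∈ Icc a b then
        {z : ℝ × ℝ | z.1 ∈ Icc a b ∧ z.2 - (fun s => m (y₁, s)) z.1 ∈ Ioo (-δ) δ}
      else (∅ : Set (ℝ × ℝ)))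
      = (Icc a b).indicator (fun _ => ENNReal.ofReal (b - a) * ENNReal.ofReal (2*δ)) y₁ := by
    intro y₁
    by_cases hy : y₁ ∈ Icc a b
    · rw [if_pos hy, indicator_of_mem hy,
        vol2 (fun s => m (y₁, s)) (hm.comp (measurable_const.prodMk measurable_id)) a b δ]
    · rw [if_neg hy, indicator_of_notMem hy, measure_empty]
  simp_rw [h2]
  rw [lintegral_indicator measurableSet_Icc _, setLIntegral_const, Real.volume_Icc]
  rw [mul_comm]

/-- The thin paraboloid shell. -/
def Sset (c δ : ℝ) : Set (ℝ × ℝ × ℝ) :=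
  {y | y.1 ∈ Icc (-2:ℝ) 2 ∧ y.2.1 ∈ Icc (-2:ℝ) 2 ∧
    y.2.2 - (fun z : ℝ × ℝ => c/2 * (z.1^2 + z.2^2)) (y.1, y.2.1) ∈ Ioo (-δ) δ}

/-- The good slabs. -/
def Gset (c δ : ℝ) (k : ℕ) : Set (ℝ × ℝ × ℝ) :=
  {x | x.1 ∈ Icc (-1:ℝ) 1 ∧ x.2.1 ∈ Icc (-1:ℝ) 1 ∧
    x.2.2 - (fun z : ℝ × ℝ => c/2 * (z.1^2 + z.2^2) + c/2 * (1/4:ℝ)^(k+1)) (x.1, x.2.1)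
      ∈ Ioo (-δ) δ}

lemma Sset_meas (c δ : ℝ) : MeasurableSet (Sset c δ) :=
  mea3 (fun z : ℝ × ℝ => c/2 * (z.1^2 + z.2^2)) (by fun_prop) (-2) 2 δ

lemma Gset_meas (c δ : ℝ) (k : ℕ) : MeasurableSet (Gset c δ k) :=
  mea3 (fun z : ℝ × ℝ => c/2 * (z.1^2 + z.2^2) + c/2 * (1/4:ℝ)^(k+1)) (by fun_prop) (-1) 1 δ

lemma Sset_vol (c δ : ℝ) : volume (Sset c δ) = ENNReal.ofReal (32 * δ) := by
  rw [Sset, vol3 (fun z : ℝ × ℝ => c/2 * (z.1^2 + z.2^2)) (by fun_prop) (-2) 2 δ]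
  have h4 : (2:ℝ) - (-2) = 4 := by norm_num
  rw [h4, ← ENNReal.ofReal_mul (by norm_num), ← ENNReal.ofReal_mul (by norm_num)]
  congr 1; ring

lemma Gset_vol (c δ : ℝ) (k : ℕ) : volume (Gset c δ k) = ENNReal.ofReal (8 * δ) := by
  rw [Gset, vol3 (fun z : ℝ × ℝ => c/2 * (z.1^2 + z.2^2) + c/2 * (1/4:ℝ)^(k+1))
    (by fun_prop) (-1) 1 δ]
  have h2 : (1:ℝ) - (-1) = 2 := by norm_num
  rw [h2, ← ENNReal.ofReal_mul (by norm_num), ← ENNReal.ofReal_mul (by norm_num)]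
  congr 1; ring

lemma tpow_eq (k : ℕ) : (2:ℝ)^(-(1+(k:ℤ))) = ((2:ℝ)^(k+1))⁻¹ := by
  rw [zpow_neg]
  congr 1
  rw [← zpow_natCast (2:ℝ) (k+1)]
  congr 1
  push_cast
  ring

lemma tpow_pos (k : ℕ) : 0 < (2:ℝ)^(-(1+(k:ℤ))) := by
  rw [tpow_eq]; positivity

lemma tpow_le (k : ℕ) : (2:ℝ)^(-(1+(k:ℤ))) ≤ 1/2 := by
  rw [tpow_eq]
  have h2 : (2:ℝ) ≤ 2^(k+1) := by
    calc (2:ℝ) = 2^1 := (pow_one 2).symm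
    _ ≤ 2^(k+1) := by
      apply pow_le_pow_right₀ (by norm_num)
      omega
  rw [inv_le_comm₀ (by positivity) (by norm_num)]
  linarith

lemma tpow_sq (k : ℕ) : ((2:ℝ)^(-(1+(k:ℤ))))^2 = (1/4:ℝ)^(k+1) := by
  rw [tpow_eq, ← inv_pow, ← pow_mul, mul_comm, pow_mul]
  norm_num

/-- On the good slab the average is exactly `2π`. -/
lemma avg_eq (c δ : ℝ) (A : Matrix (Fin 2) (Fin 2) ℝ)
    (hA : A = c • (1 : Matrix (Fin 2) (Fin 2) ℝ)) (k : ℕ) (x : ℝ × ℝ × ℝ)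
    (hx : x ∈ Gset c δ k) :
    ellipAvg A ((2:ℝ)^(-(1+(k:ℤ)))) ((2:ℝ)^(-(1+(k:ℤ))))
      ((Sset c δ).indicator (fun _ => 1)) x = ((2*π : ℝ) : ℂ) := by
  obtain ⟨hx1, hx2, hx3⟩ := hx
  obtain ⟨hx1a, hx1b⟩ := hx1
  obtain ⟨hx2a, hx2b⟩ := hx2
  obtain ⟨hx3a, hx3b⟩ := hx3
  simp only at hx3a hx3b
  set t : ℝ := (2:ℝ)^(-(1+(k:ℤ))) with ht
  have htpos : 0 < t := tpow_pos k
  have htle : t ≤ 1/2 := tpow_le k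
  have ht4 : t^2 = (1/4:ℝ)^(k+1) := tpow_sq k
  have hA00 : A 0 0 = c := by rw [hA]; simp [Matrix.smul_apply, Matrix.one_apply]
  have hA01 : A 0 1 = 0 := by rw [hA]; simp [Matrix.smul_apply, Matrix.one_apply]
  have hA10 : A 1 0 = 0 := by rw [hA]; simp [Matrix.smul_apply, Matrix.one_apply]
  have hA11 : A 1 1 = c := by rw [hA]; simp [Matrix.smul_apply, Matrix.one_apply]
  have hint : ∀ θ ∈ Set.uIcc (0:ℝ) (2*π),
      (Sset c δ).indicator (fun _ => (1:ℂ))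
        (x.1 - t * Real.cos θ, x.2.1 - t * Real.sin θ,
          x.2.2 - (x.1 * (A 0 0 * (t * Real.cos θ) + A 0 1 * (t * Real.sin θ))
            + x.2.1 * (A 1 0 * (t * Real.cos θ) + A 1 1 * (t * Real.sin θ)))) = 1 := by
    intro θ _
    have hcos1 := Real.neg_one_le_cos θ
    have hcos2 := Real.cos_le_one θ
    have hsin1 := Real.neg_one_le_sin θ
    have hsin2 := Real.sin_le_one θ
    have hc1 : x.1 - t * Real.cos θ ∈ Icc (-2:ℝ) 2 := by
      constructor <;> nlinarith
    have hc2 : x.2.1 - t * Real.sin θ ∈ Icc (-2:ℝ) 2 := by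
      constructor <;> nlinarith
    have hkey : (x.2.2 - (x.1 * (A 0 0 * (t * Real.cos θ) + A 0 1 * (t * Real.sin θ))
          + x.2.1 * (A 1 0 * (t * Real.cos θ) + A 1 1 * (t * Real.sin θ))))
          - c/2 * ((x.1 - t * Real.cos θ)^2 + (x.2.1 - t * Real.sin θ)^2)
        = x.2.2 - (c/2 * (x.1^2 + x.2.1^2) + c/2 * (1/4:ℝ)^(k+1)) := by
      rw [hA00, hA01, hA10, hA11, ← ht4]
      linear_combination (-(c/2)*t^2) * Real.sin_sq_add_cos_sq θ
    have hc3 : (x.2.2 - (x.1 * (A 0 0 * (t * Real.cos θ) + A 0 1 * (t * Real.sin θ))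
          + x.2.1 * (A 1 0 * (t * Real.cos θ) + A 1 1 * (t * Real.sin θ))))
          - c/2 * ((x.1 - t * Real.cos θ)^2 + (x.2.1 - t * Real.sin θ)^2) ∈ Ioo (-δ) δ := by
      rw [hkey]
      exact ⟨by linarith, by linarith⟩
    have hmem' : (x.1 - t * Real.cos θ, x.2.1 - t * Real.sin θ,
        x.2.2 - (x.1 * (A 0 0 * (t * Real.cos θ) + A 0 1 * (t * Real.sin θ))
          + x.2.1 * (A 1 0 * (t * Real.cos θ) + A 1 1 * (t * Real.sin θ)))) ∈ Sset c δ :=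
      ⟨hc1, hc2, hc3⟩
    exact Set.indicator_of_mem hmem' _
  rw [ellipAvg, intervalIntegral.integral_congr hint, intervalIntegral.integral_const]
  simp [Complex.real_smul]

/-- Pointwise lower bound for the maximal function on the good slabs. -/
lemma circMax_lower (c δ : ℝ) (A : Matrix (Fin 2) (Fin 2) ℝ)
    (hA : A = c • (1 : Matrix (Fin 2) (Fin 2) ℝ)) (k : ℕ) (x : ℝ × ℝ × ℝ)
    (hx : x ∈ Gset c δ k) :
    ENNReal.ofReal (2*π) ≤ circMax A ((Sset c δ).indicator (fun _ => 1)) x := by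
  have hle := le_iSup (fun j : ℤ =>
    (‖ellipAvg A ((2:ℝ)^j) ((2:ℝ)^j) ((Sset c δ).indicator (fun _ => 1)) x‖₊ : ℝ≥0∞))
    (-(1+(k:ℤ)))
  rw [avg_eq c δ A hA k x hx] at hle
  calc ENNReal.ofReal (2*π) = (‖((2*π:ℝ):ℂ)‖₊ : ℝ≥0∞) := by
        rw [Complex.nnnorm_real]; exact (Real.enorm_eq_ofReal (by positivity)).symm
  _ ≤ circMax A ((Sset c δ).indicator (fun _ => 1)) x := hle

/-- Disjointness of the good slabs. -/
lemma Gset_disj (c : ℝ) (hc : c ≠ 0) (N : ℕ) (j i : ℕ) (hji : j < i) (hiN : i < N) :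
    ∀ x : ℝ × ℝ × ℝ, x ∈ Gset c (|c| * (1/4:ℝ)^N / 8) j →
      x ∉ Gset c (|c| * (1/4:ℝ)^N / 8) i := by
  intro x hxj hxi
  obtain ⟨_, _, h3j⟩ := hxj
  obtain ⟨_, _, h3i⟩ := hxi
  simp only [mem_Ioo] at h3j h3i
  have hX : (0:ℝ) < (1/4:ℝ)^N := by positivity
  have hrj : (1/4:ℝ)^N ≤ (1/4:ℝ)^(j+1) :=
    pow_le_pow_of_le_one (by norm_num) (by norm_num) (by omega)
  have hri : (1/4:ℝ)^(i+1) ≤ (1/4:ℝ)^(j+2) :=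
    pow_le_pow_of_le_one (by norm_num) (by norm_num) (by omega)
  have hjj : (1/4:ℝ)^(j+2) = (1/4:ℝ)^(j+1) * (1/4) := pow_succ _ _
  have hgap : (3/4) * (1/4:ℝ)^N ≤ (1/4:ℝ)^(j+1) - (1/4:ℝ)^(i+1) := by nlinarith
  rcases lt_or_gt_of_ne hc with hneg | hpos
  · have habs : |c| = -c := abs_of_neg hneg
    rw [habs] at h3j h3i
    have hmul := mul_le_mul_of_nonneg_left hgap (by linarith : (0:ℝ) ≤ (-c)/2)
    have h1 := h3j.2
    have h2 := h3i.1
    nlinarith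
  · have habs : |c| = c := abs_of_pos hpos
    rw [habs] at h3j h3i
    have hmul := mul_le_mul_of_nonneg_left hgap (by linarith : (0:ℝ) ≤ c/2)
    have h1 := h3j.1
    have h2 := h3i.2
    nlinarith


end AuxLemmas
open Set

/-- if `A = c I₂` with `c ≠ 0`, then for `0 < p < ∞` the lacunary circular
maximal operator `𝓔¹_A` is unbounded on `L^p(ℝ³)`. -/
theorem stmt0 (p : ℝ≥0∞) (hp : 0 < p) (hp' : p ≠ ∞) (c : ℝ) (hc : c ≠ 0)
    (A : Matrix (Fin 2) (Fin 2) ℝ) (hA : A = c • (1 : Matrix (Fin 2) (Fin 2) ℝ)) :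
    ∀ C : ℝ, 0 < C → ∃ f : ℝ × ℝ × ℝ → ℂ, MemLp f p volume ∧
      ENNReal.ofReal C * eLpNorm f p volume < lpNormE (circMax A f) p volume := by
  intro C hC
  have hπ : (0:ℝ) < π := Real.pi_pos
  have hcabs : (0:ℝ) < |c| := abs_pos.mpr hc
  set p' : ℝ := p.toReal with hp'def
  have hp'pos : 0 < p' := ENNReal.toReal_pos hp.ne' hp'
  obtain ⟨N, hN⟩ := exists_nat_gt (4 * (C / (2*π)) ^ p')
  have hNR : (4:ℝ) * (C/(2*π))^p' < N := hN
  have hNpos : 0 < N := by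
    by_contra h
    push_neg at h
    interval_cases N
    have h0 : (0:ℝ) < 4 * (C/(2*π))^p' := by positivity
    simp only [Nat.cast_zero] at hNR
    linarith
  set δ : ℝ := |c| * (1/4:ℝ)^N / 8 with hδdef
  have hδpos : 0 < δ := by positivity
  set f : ℝ × ℝ × ℝ → ℂ := (Sset c δ).indicator (fun _ => 1) with hf
  have hSmeas : MeasurableSet (Sset c δ) := Sset_meas c δ
  have hSvol : volume (Sset c δ) = ENNReal.ofReal (32 * δ) := Sset_vol c δ
  have hmem : MemLp f p volume :=
    memLp_indicator_const p hSmeas 1 (Or.inr (by rw [hSvol]; exact ENNReal.ofReal_ne_top))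
  have hfnorm : eLpNorm f p volume = ENNReal.ofReal (32*δ) ^ (1/p') := by
    rw [hf, eLpNorm_indicator_const hSmeas hp.ne' hp', hSvol]
    simp
    rfl
  have hGdisj : (↑(Finset.range N) : Set ℕ).PairwiseDisjoint (Gset c δ) := by
    intro j hj i hi hne
    simp only [Finset.coe_range, mem_Iio] at hj hi
    rcases Nat.lt_or_ge j i with h | h
    · exact Set.disjoint_left.mpr (fun x hxj hxi => Gset_disj c hc N j i h hi x hxj hxi)
    · have h' : i < j := lt_of_le_of_ne h (Ne.symm hne)
      exact Set.disjoint_right.mpr (fun x hxj hxi => Gset_disj c hc N i j h' hj x hxj hxi)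
  set GU : Set (ℝ × ℝ × ℝ) := ⋃ k ∈ Finset.range N, Gset c δ k with hGU
  have hGUmeas : MeasurableSet GU :=
    (Finset.range N).measurableSet_biUnion (fun k _ => Gset_meas c δ k)
  have hGUvol : volume GU = (N : ℝ≥0∞) * ENNReal.ofReal (8*δ) := by
    rw [hGU, measure_biUnion_finset hGdisj (fun k _ => Gset_meas c δ k)]
    simp [Gset_vol, Finset.sum_const, Finset.card_range, nsmul_eq_mul]
  have hlow : ENNReal.ofReal ((2*π)^p') * volume GU ≤ ∫⁻ x, (circMax A f x) ^ p' := by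
    have hptwise : ∀ x, GU.indicator (fun _ => ENNReal.ofReal ((2*π)^p')) x
        ≤ (circMax A f x) ^ p' := by
      intro x
      by_cases hx : x ∈ GU
      · rw [indicator_of_mem hx]
        rw [hGU] at hx
        simp only [Finset.mem_range, Set.mem_iUnion] at hx
        obtain ⟨k, hk, hxk⟩ := hx
        have h1 : ENNReal.ofReal (2*π) ≤ circMax A f x := circMax_lower c δ A hA k x hxk
        calc ENNReal.ofReal ((2*π)^p') = (ENNReal.ofReal (2*π))^p' :=
              (ENNReal.ofReal_rpow_of_pos (by positivity)).symm
        _ ≤ (circMax A f x)^p' := ENNReal.rpow_le_rpow h1 hp'pos.le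
      · rw [indicator_of_notMem hx]; exact zero_le
    calc ENNReal.ofReal ((2*π)^p') * volume GU
        = ∫⁻ x, GU.indicator (fun _ => ENNReal.ofReal ((2*π)^p')) x := by
          rw [lintegral_indicator hGUmeas _, setLIntegral_const]
    _ ≤ ∫⁻ x, (circMax A f x)^p' := lintegral_mono hptwise
  have hRHS : ENNReal.ofReal (((2*π)^p' * ((N:ℝ)*(8*δ)))^(1/p'))
      ≤ lpNormE (circMax A f) p volume := by
    rw [lpNormE, if_neg hp']
    have h1 : ENNReal.ofReal ((2*π)^p' * ((N:ℝ)*(8*δ))) ≤ ∫⁻ x, circMax A f x ^ p.toReal := by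
      have heq : ENNReal.ofReal ((2*π)^p' * ((N:ℝ)*(8*δ)))
          = ENNReal.ofReal ((2*π)^p') * volume GU := by
        rw [hGUvol, ENNReal.ofReal_mul (by positivity), ENNReal.ofReal_mul (by positivity),
          ENNReal.ofReal_natCast]
      rw [heq, ← hp'def]
      exact hlow
    calc ENNReal.ofReal (((2*π)^p' * ((N:ℝ)*(8*δ)))^(1/p'))
        = (ENNReal.ofReal ((2*π)^p' * ((N:ℝ)*(8*δ))))^(1/p') := by
          rw [ENNReal.ofReal_rpow_of_pos (by positivity)]
    _ ≤ (∫⁻ x, circMax A f x ^ p.toReal)^(1/p.toReal) := by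
          rw [← hp'def]
          exact ENNReal.rpow_le_rpow h1 (by positivity)
  have hLHS : ENNReal.ofReal C * eLpNorm f p volume = ENNReal.ofReal (C * (32*δ)^(1/p')) := by
    rw [hfnorm, ENNReal.ofReal_rpow_of_pos (by positivity), ← ENNReal.ofReal_mul hC.le]
  refine ⟨f, hmem, ?_⟩
  rw [hLHS]
  refine lt_of_lt_of_le ?_ hRHS
  rw [ENNReal.ofReal_lt_ofReal_iff (by positivity)]
  -- the real-number inequality
  have e1 : ((2*π:ℝ)^p' * ((N:ℝ)*(8*δ)))^(1/p') = (2*π) * (((N:ℝ)*(8*δ))^(1/p')) := by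
    rw [Real.mul_rpow (by positivity) (by positivity), ← Real.rpow_mul (by positivity),
      mul_one_div_cancel hp'pos.ne', Real.rpow_one]
  have e2 : (((N:ℝ))*(8*δ))^(1/p') = (N:ℝ)^(1/p') * (8*δ)^(1/p') :=
    Real.mul_rpow (by positivity) (by positivity)
  have e3 : ((32:ℝ)*δ)^(1/p') = (4:ℝ)^(1/p') * (8*δ)^(1/p') := by
    rw [← Real.mul_rpow (by norm_num) (by positivity)]
    norm_num
    congr 1
    ring
  have e4 : (4:ℝ)^(1/p') * (C/(2*π)) < (N:ℝ)^(1/p') := by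
    have h0 : ((4 * (C/(2*π))^p' : ℝ))^(1/p') < (N:ℝ)^(1/p') :=
      Real.rpow_lt_rpow (by positivity) hNR (by positivity)
    calc (4:ℝ)^(1/p') * (C/(2*π))
        = ((4:ℝ) * (C/(2*π))^p')^(1/p') := by
          rw [Real.mul_rpow (by norm_num) (by positivity),
            ← Real.rpow_mul (by positivity), mul_one_div_cancel hp'pos.ne', Real.rpow_one]
    _ < _ := h0
  have e5 : (4:ℝ)^(1/p') * C < (N:ℝ)^(1/p') * (2*π) := by
    have := mul_lt_mul_of_pos_right e4 (by positivity : (0:ℝ) < 2*π)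
    calc (4:ℝ)^(1/p') * C = (4:ℝ)^(1/p') * (C/(2*π)) * (2*π) := by
          field_simp
    _ < (N:ℝ)^(1/p') * (2*π) := this
  have h8 : (0:ℝ) < (8*δ)^(1/p') := by positivity
  rw [e1, e2, e3]
  nlinarith [mul_lt_mul_of_pos_right e5 h8]
end
end

section
/- Let 0<p<∞, c∈ℝ\{0} and a∈ℤ. If A is the diagonal matrix with diagonal entries c and c·2^{2a}, then the lacunary elliptic maximal operator 𝓔²_A is unbounded on L^p(ℝ³): for every constant C>0 there exists f∈L^p(ℝ³) with ‖𝓔²_A f‖_{L^p(ℝ³)} > C‖f‖_{L^p(ℝ³)}. -/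
open MeasureTheory Real
open scoped ENNReal NNReal

noncomputable section

lemma shearMP (q : ℝ × ℝ → ℝ) (hq : Measurable q) :
    MeasurePreserving (fun y : ℝ × ℝ × ℝ => (y.1, y.2.1, y.2.2 - q (y.1, y.2.1)))
      volume volume := by
  have h1 : ∀ b : ℝ, MeasurePreserving
      (fun z : ℝ × ℝ => (z.1, z.2 - q (b, z.1))) (volume : Measure (ℝ × ℝ)) volume := by
    intro b
    rw [Measure.volume_eq_prod]
    refine (MeasurePreserving.id volume).skew_product
      (g := fun (u : ℝ) (v : ℝ) => v - q (b, u)) ?_ ?_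
    · exact measurable_snd.sub (hq.comp (measurable_const.prodMk measurable_fst))
    · exact Filter.Eventually.of_forall fun u =>
        (measurePreserving_sub_right volume (q (b, u))).map_eq
  rw [Measure.volume_eq_prod]
  refine (MeasurePreserving.id volume).skew_product
    (g := fun (a : ℝ) (z : ℝ × ℝ) => (z.1, z.2 - q (a, z.1))) ?_ ?_
  · exact (measurable_fst.comp measurable_snd).prodMk
      ((measurable_snd.comp measurable_snd).sub
        (hq.comp (measurable_fst.prodMk (measurable_fst.comp measurable_snd))))
  · exact Filter.Eventually.of_forall fun a => (h1 a).map_eq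

lemma alg_id (x1 x2 x3 t1 t2 P c s co : ℝ) (hsc : s^2 + co^2 = 1) (htt : P * t2^2 = t1^2) :
    x3 - (x1*(c*(t1*co) + 0*(t2*s)) + x2*(0*(t1*co) + c*P*(t2*s)))
      - (c/2*((x1 - t1*co)^2 + P*(x2 - t2*s)^2))
    = (x3 - c/2*(x1^2 + P*x2^2)) - c/2 * t1^2 := by
  linear_combination (-(c/2) * s^2) * htt + (-(c/2) * t1^2) * hsc

set_option maxHeartbeats 2000000 in
/-- if `A = diag(c, c·2^{2a})` with `c ≠ 0`, `a ∈ ℤ`, then for `0 < p < ∞` the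
lacunary elliptic maximal operator `𝓔²_A` is unbounded on `L^p(ℝ³)`. -/
theorem stmt1 (p : ℝ≥0∞) (hp : 0 < p) (hp' : p ≠ ∞) (c : ℝ) (hc : c ≠ 0) (a : ℤ)
    (A : Matrix (Fin 2) (Fin 2) ℝ)
    (hA : A = Matrix.diagonal ![c, c * (2:ℝ)^(2*a)]) :
    ∀ C : ℝ, 0 < C → ∃ f : ℝ × ℝ × ℝ → ℂ, MemLp f p volume ∧
      ENNReal.ofReal C * eLpNorm f p volume < lpNormE (ellipMax A f) p volume := by
  intro C hC
  have h2pi : (0:ℝ) < 2 * π := by positivity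
  set pr := p.toReal with hprdef
  have hpr : 0 < pr := ENNReal.toReal_pos hp.ne' hp'
  -- choice of N
  set y : ℝ := C * (100:ℝ) ^ (1/pr) / (2*π) with hy
  have hy0 : 0 ≤ y := by positivity
  set N : ℕ := ⌈y ^ pr⌉₊ + 1 with hNdef
  have hNy : y ^ pr < (N:ℝ) := by
    calc y ^ pr ≤ (⌈y ^ pr⌉₊ : ℝ) := Nat.le_ceil _
    _ < (N:ℝ) := by rw [hNdef]; push_cast; linarith
  have hNpos : 0 < (N:ℝ) := by positivity
  have hkey : C * (100:ℝ) ^ (1/pr) < 2*π * (N:ℝ) ^ (1/pr) := by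
    have h1 : y < (N:ℝ) ^ (1/pr) := by
      have h2 := Real.rpow_lt_rpow (by positivity) hNy (by positivity : (0:ℝ) < 1/pr)
      rwa [← Real.rpow_mul hy0, mul_one_div_cancel hpr.ne', Real.rpow_one] at h2
    rw [hy, div_lt_iff₀ h2pi] at h1
    linarith
  -- geometric data
  set m : ℝ := c/2 with hmdef
  have hm : m ≠ 0 := by simp [hmdef, hc]
  have habs : 0 < |m| := abs_pos.mpr hm
  set k₀ : ℤ := min 0 a with hk0
  set δ : ℝ := |m| * (2:ℝ)^(2*(k₀ - N)) with hδdef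
  have hδ : 0 < δ := by positivity
  set e : ℕ → ℤ := fun i => k₀ - 1 - i with hedef
  set q : ℝ × ℝ → ℝ := fun z => m * (z.1^2 + (2:ℝ)^(2*a) * z.2^2) with hqdef
  have hq : Measurable q := by
    apply Measurable.const_mul
    exact ((measurable_fst.pow_const 2).add
      ((measurable_snd.pow_const 2).const_mul _))
  set T : ℝ × ℝ × ℝ → ℝ × ℝ × ℝ :=
    fun y => (y.1, y.2.1, y.2.2 - q (y.1, y.2.1)) with hTdef
  have hT : MeasurePreserving T volume volume := shearMP q hq
  set B : Set (ℝ × ℝ × ℝ) :=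
    Set.Icc (-10:ℝ) 10 ×ˢ Set.Icc (-10:ℝ) 10 ×ˢ Set.Ioo (0:ℝ) δ with hBdef
  have hBm : MeasurableSet B :=
    measurableSet_Icc.prod (measurableSet_Icc.prod measurableSet_Ioo)
  set S : Set (ℝ × ℝ × ℝ) := T ⁻¹' B with hSdef
  have hSm : MeasurableSet S := hT.measurable hBm
  set f : ℝ × ℝ × ℝ → ℂ := S.indicator (fun _ => (1:ℂ)) with hfdef
  have μS : volume S = ENNReal.ofReal (400 * δ) := by
    rw [hSdef, hT.measure_preimage hBm.nullMeasurableSet, hBdef]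
    rw [Measure.volume_eq_prod, Measure.prod_prod, Measure.volume_eq_prod, Measure.prod_prod,
      Real.volume_Icc, Real.volume_Ioo]
    rw [← ENNReal.ofReal_mul (by norm_num), ← ENNReal.ofReal_mul (by norm_num)]
    congr 1; ring
  -- intervals
  set J : ℕ → Set ℝ :=
    fun i => Set.Ioo (m * (2:ℝ)^(2*e i)) (m * (2:ℝ)^(2*e i) + δ) with hJdef
  set U : Set ℝ := ⋃ i ∈ Finset.range N, J i with hUdef
  have hJm : ∀ i, MeasurableSet (J i) := fun i => measurableSet_Ioo
  have gap : ∀ i j : ℕ, j < N → i < j →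
      δ ≤ |m| * ((2:ℝ)^(2*e i) - (2:ℝ)^(2*e j)) := by
    intro i j hj hij
    have he1 : e j + 1 ≤ e i := by
      simp only [hedef]; omega
    have he2 : k₀ - N ≤ e j := by
      simp only [hedef]; omega
    have h1 : (2:ℝ)^(2*e j + 2) ≤ (2:ℝ)^(2*e i) :=
      zpow_le_zpow_right₀ (by norm_num) (by linarith)
    have h2 : (2:ℝ)^(2*e j + 2) = 4 * (2:ℝ)^(2*e j) := by
      rw [zpow_add₀ (by norm_num : (2:ℝ) ≠ 0)]; norm_num; ring
    have h3 : (2:ℝ)^(2*(k₀ - N)) ≤ (2:ℝ)^(2*e j) :=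
      zpow_le_zpow_right₀ (by norm_num) (by linarith)
    have h4 : (2:ℝ)^(2*(k₀-N)) ≤ (2:ℝ)^(2*e i) - (2:ℝ)^(2*e j) := by
      have hpos : (0:ℝ) < (2:ℝ)^(2*e j) := by positivity
      nlinarith
    calc δ = |m| * (2:ℝ)^(2*(k₀ - N)) := hδdef
    _ ≤ |m| * ((2:ℝ)^(2*e i) - (2:ℝ)^(2*e j)) :=
        mul_le_mul_of_nonneg_left h4 (abs_nonneg m)
  have hdisj2 : ∀ i j : ℕ, i < N → j < N → i < j → Disjoint (J i) (J j) := by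
    intro i j hi hj hij
    have hd := gap i j hj hij
    rw [hJdef]
    rw [Set.Ioo_disjoint_Ioo]
    rcases le_or_gt 0 m with hm0 | hm0
    · rw [abs_of_nonneg hm0] at hd
      have : m * (2:ℝ)^(2*e j) + δ ≤ m * (2:ℝ)^(2*e i) := by nlinarith
      calc min (m * (2:ℝ)^(2*e i) + δ) (m * (2:ℝ)^(2*e j) + δ)
          ≤ m * (2:ℝ)^(2*e j) + δ := min_le_right _ _
      _ ≤ m * (2:ℝ)^(2*e i) := this
      _ ≤ max (m * (2:ℝ)^(2*e i)) (m * (2:ℝ)^(2*e j)) := le_max_left _ _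
    · rw [abs_of_neg hm0] at hd
      have : m * (2:ℝ)^(2*e i) + δ ≤ m * (2:ℝ)^(2*e j) := by nlinarith
      calc min (m * (2:ℝ)^(2*e i) + δ) (m * (2:ℝ)^(2*e j) + δ)
          ≤ m * (2:ℝ)^(2*e i) + δ := min_le_left _ _
      _ ≤ m * (2:ℝ)^(2*e j) := this
      _ ≤ max (m * (2:ℝ)^(2*e i)) (m * (2:ℝ)^(2*e j)) := le_max_right _ _
  have hdisj : (↑(Finset.range N) : Set ℕ).PairwiseDisjoint J := by
    intro i hi j hj hij
    simp only [Finset.coe_range, Set.mem_Iio] at hi hj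
    rcases lt_or_gt_of_ne hij with h | h
    · exact hdisj2 i j hi hj h
    · exact (hdisj2 j i hj hi h).symm
  have hUm : MeasurableSet U := by
    rw [hUdef]; exact MeasurableSet.biUnion (Set.to_countable _) (fun i _ => hJm i)
  have μU : volume U = (N : ℝ≥0∞) * ENNReal.ofReal δ := by
    rw [hUdef, measure_biUnion_finset hdisj (fun i _ => hJm i)]
    have : ∀ i ∈ Finset.range N, volume (J i) = ENNReal.ofReal δ := by
      intro i _
      rw [hJdef]; rw [Real.volume_Ioo]; congr 1; ring
    rw [Finset.sum_congr rfl this, Finset.sum_const, Finset.card_range, nsmul_eq_mul]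
  set Bx : Set (ℝ × ℝ × ℝ) :=
    Set.Icc (-1:ℝ) 1 ×ˢ Set.Icc (-1:ℝ) 1 ×ˢ U with hBxdef
  have hBxm : MeasurableSet Bx := measurableSet_Icc.prod (measurableSet_Icc.prod hUm)
  set E : Set (ℝ × ℝ × ℝ) := T ⁻¹' Bx with hEdef
  have hEm : MeasurableSet E := hT.measurable hBxm
  have μE : volume E = ENNReal.ofReal (4 * N * δ) := by
    rw [hEdef, hT.measure_preimage hBxm.nullMeasurableSet, hBxdef]
    rw [Measure.volume_eq_prod, Measure.prod_prod, Measure.volume_eq_prod, Measure.prod_prod,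
      Real.volume_Icc, μU]
    rw [show ((1:ℝ) - -1) = 2 by norm_num]
    rw [← ENNReal.ofReal_natCast N, ← ENNReal.ofReal_mul (by positivity),
      ← ENNReal.ofReal_mul (by norm_num), ← ENNReal.ofReal_mul (by norm_num)]
    congr 1; ring
  -- pointwise lower bound on E
  have hpt : ∀ x ∈ E, ENNReal.ofReal (2*π) ≤ ellipMax A f x := by
    intro x hx
    simp only [hEdef, Set.mem_preimage, hTdef, hBxdef, Set.mem_prod] at hx
    obtain ⟨hx1, hx2, hx3⟩ := hx
    rw [hUdef] at hx3
    simp only [Set.mem_iUnion, exists_prop, Finset.mem_range] at hx3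
    obtain ⟨i, hiN, hgi⟩ := hx3
    rw [hJdef, Set.mem_Ioo] at hgi
    have hei : e i ≤ 0 := by simp only [hedef]; omega
    have heia : e i - a ≤ 0 := by simp only [hedef, hk0]; omega
    set t1 : ℝ := (2:ℝ)^(e i) with ht1def
    set t2 : ℝ := (2:ℝ)^(e i - a) with ht2def
    have ht1pos : 0 < t1 := by positivity
    have ht2pos : 0 < t2 := by positivity
    have ht1le : t1 ≤ 1 := zpow_le_one_of_nonpos₀ (by norm_num) hei
    have ht2le : t2 ≤ 1 := zpow_le_one_of_nonpos₀ (by norm_num) heia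
    have htt : (2:ℝ)^(2*a) * t2^2 = t1^2 := by
      rw [ht1def, ht2def, sq, sq, ← zpow_add₀ (by norm_num : (2:ℝ) ≠ 0),
        ← zpow_add₀ (by norm_num : (2:ℝ) ≠ 0), ← zpow_add₀ (by norm_num : (2:ℝ) ≠ 0)]
      ring_nf
    have ht4 : t1^2 = (2:ℝ)^(2*e i) := by
      rw [ht1def, sq, ← zpow_add₀ (by norm_num : (2:ℝ) ≠ 0), two_mul]
    have hA00 : A 0 0 = c := by rw [hA]; simp
    have hA01 : A 0 1 = 0 := by rw [hA]; simp [Matrix.diagonal_apply_ne]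
    have hA10 : A 1 0 = 0 := by rw [hA]; simp [Matrix.diagonal_apply_ne]
    have hA11 : A 1 1 = c * (2:ℝ)^(2*a) := by rw [hA]; simp
    have hmem : ∀ θ : ℝ,
        (x.1 - t1 * Real.cos θ, x.2.1 - t2 * Real.sin θ,
          x.2.2 - (x.1 * (A 0 0 * (t1 * Real.cos θ) + A 0 1 * (t2 * Real.sin θ))
            + x.2.1 * (A 1 0 * (t1 * Real.cos θ) + A 1 1 * (t2 * Real.sin θ)))) ∈ S := by
      intro θ
      simp only [hSdef, Set.mem_preimage, hTdef, hBdef, Set.mem_prod, Set.mem_Icc, Set.mem_Ioo]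
      have hco1 := Real.cos_le_one θ
      have hco2 := Real.neg_one_le_cos θ
      have hsi1 := Real.sin_le_one θ
      have hsi2 := Real.neg_one_le_sin θ
      have hb1 : t1 * Real.cos θ ≤ t1 := by nlinarith
      have hb2 : -t1 ≤ t1 * Real.cos θ := by nlinarith
      have hb3 : t2 * Real.sin θ ≤ t2 := by nlinarith
      have hb4 : -t2 ≤ t2 * Real.sin θ := by nlinarith
      rw [hA00, hA01, hA10, hA11]
      have heq : x.2.2 - (x.1 * (c * (t1 * Real.cos θ) + 0 * (t2 * Real.sin θ))
            + x.2.1 * (0 * (t1 * Real.cos θ) + c * (2:ℝ)^(2*a) * (t2 * Real.sin θ)))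
          - q (x.1 - t1 * Real.cos θ, x.2.1 - t2 * Real.sin θ)
          = (x.2.2 - q (x.1, x.2.1)) - m * (2:ℝ)^(2*e i) := by
        have hq1 : q (x.1 - t1 * Real.cos θ, x.2.1 - t2 * Real.sin θ)
            = m * ((x.1 - t1*Real.cos θ)^2 + (2:ℝ)^(2*a) * (x.2.1 - t2*Real.sin θ)^2) := rfl
        have hq2 : q (x.1, x.2.1) = m * (x.1^2 + (2:ℝ)^(2*a) * x.2.1^2) := rfl
        rw [hq1, hq2, hmdef, ← ht4]
        linear_combination (-(c/2) * Real.sin θ^2) * htt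
          + (-(c/2) * t1^2) * (Real.sin_sq_add_cos_sq θ)
      refine ⟨⟨?_, ?_⟩, ⟨?_, ?_⟩, ?_, ?_⟩
      · have := hx1.1; linarith
      · have := hx1.2; linarith
      · have := hx2.1; linarith
      · have := hx2.2; linarith
      · linarith [heq, hgi.1]
      · linarith [heq, hgi.2]
    have havg : ellipAvg A t1 t2 f x = ((2*π : ℝ) : ℂ) := by
      unfold ellipAvg
      rw [intervalIntegral.integral_congr (g := fun _ => (1:ℂ))
        (fun θ _ => Set.indicator_of_mem (hmem θ) _)]
      rw [intervalIntegral.integral_const]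
      simp [Complex.real_smul]
    have hnn : (‖ellipAvg A t1 t2 f x‖₊ : ℝ≥0∞) = ENNReal.ofReal (2*π) := by
      rw [havg]
      rw [← Real.enorm_eq_ofReal (by positivity)]
      congr 1
      simp [nnnorm]
    calc ENNReal.ofReal (2*π) = (‖ellipAvg A t1 t2 f x‖₊ : ℝ≥0∞) := hnn.symm
    _ ≤ ellipMax A f x := by
        rw [ellipMax]
        exact le_iSup (fun K : ℤ × ℤ => (‖ellipAvg A ((2:ℝ)^K.1) ((2:ℝ)^K.2) f x‖₊ : ℝ≥0∞))
          ((e i, e i - a) : ℤ × ℤ)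
  -- assemble
  refine ⟨f, ?_, ?_⟩
  · exact memLp_indicator_const p hSm 1 (Or.inr (by rw [μS]; exact ENNReal.ofReal_ne_top))
  · have hfnorm : eLpNorm f p volume = (ENNReal.ofReal (400*δ)) ^ (1/pr) := by
      rw [hfdef, eLpNorm_indicator_const hSm hp.ne' hp', μS]
      simp [hprdef]
    have hlow : ENNReal.ofReal (2*π) ^ pr * ENNReal.ofReal (4 * N * δ)
        ≤ ∫⁻ x, ellipMax A f x ^ pr := by
      rw [← μE]
      calc ENNReal.ofReal (2*π) ^ pr * volume E
          = ∫⁻ x, E.indicator (fun _ => ENNReal.ofReal (2*π) ^ pr) x := by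
            rw [lintegral_indicator hEm, setLIntegral_const]
      _ ≤ ∫⁻ x, ellipMax A f x ^ pr := by
            apply lintegral_mono
            intro x
            by_cases hx : x ∈ E
            · rw [Set.indicator_of_mem hx]
              exact ENNReal.rpow_le_rpow (hpt x hx) hpr.le
            · rw [Set.indicator_of_notMem hx]; exact zero_le
    have hlp : ENNReal.ofReal (2*π) * ENNReal.ofReal (4 * N * δ) ^ (1/pr)
        ≤ lpNormE (ellipMax A f) p volume := by
      rw [lpNormE, if_neg hp']
      calc ENNReal.ofReal (2*π) * ENNReal.ofReal (4 * N * δ) ^ (1/pr)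
          = (ENNReal.ofReal (2*π) ^ pr * ENNReal.ofReal (4 * N * δ)) ^ (1/pr) := by
            rw [ENNReal.mul_rpow_of_nonneg _ _ (by positivity), ← ENNReal.rpow_mul,
              mul_one_div_cancel hpr.ne', ENNReal.rpow_one]
      _ ≤ (∫⁻ x, ellipMax A f x ^ pr) ^ (1/pr) :=
            ENNReal.rpow_le_rpow hlow (by positivity)
    refine lt_of_lt_of_le ?_ hlp
    rw [hfnorm]
    rw [ENNReal.ofReal_rpow_of_nonneg (by positivity) (by positivity),
      ENNReal.ofReal_rpow_of_nonneg (by positivity) (by positivity),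
      ← ENNReal.ofReal_mul hC.le, ← ENNReal.ofReal_mul h2pi.le]
    rw [ENNReal.ofReal_lt_ofReal_iff (by positivity)]
    have hr1 : ((400:ℝ)*δ) ^ (1/pr) = (100:ℝ)^(1/pr) * ((4*δ)^(1/pr)) := by
      rw [← Real.mul_rpow (by norm_num) (by positivity)]
      norm_num; ring_nf
    have hr2 : ((4:ℝ)*N*δ) ^ (1/pr) = (N:ℝ)^(1/pr) * ((4*δ)^(1/pr)) := by
      rw [← Real.mul_rpow (by positivity) (by positivity)]
      congr 1; ring
    rw [hr1, hr2]
    have hX : (0:ℝ) < (4*δ)^(1/pr) := by positivity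
    calc C * ((100:ℝ)^(1/pr) * ((4*δ)^(1/pr)))
        = (C * (100:ℝ)^(1/pr)) * ((4*δ)^(1/pr)) := by ring
    _ < (2*π * (N:ℝ)^(1/pr)) * ((4*δ)^(1/pr)) := mul_lt_mul_of_pos_right hkey hX
    _ = 2*π * ((N:ℝ)^(1/pr) * ((4*δ)^(1/pr))) := by ring
end
end

section
/- For every θ∈ℝ and every (η₁,η₂,η₃,η₄)∈ℝ⁴, writing φ(θ)=η₁cosθ+η₂sinθ+η₃cos2θ+η₄sin2θ, the sum of the absolute values of the first four derivatives of φ at θ satisfies |−η₁sinθ+η₂cosθ−2η₃sin2θ+2η₄cos2θ| + |−η₁cosθ−η₂sinθ−4η₃cos2θ−4η₄sin2θ| + |η₁sinθ−η₂cosθ+8η₃sin2θ−8η₄cos2θ| + |η₁cosθ+η₂sinθ+16η₃cos2θ+16η₄sin2θ| ≥ 2^{−100}(√(η₁²+η₂²) + √(η₃²+η₄²)). -/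
open Real


lemma sqrt_sq_add_sq_le (x y : ℝ) : Real.sqrt (x^2 + y^2) ≤ |x| + |y| := by
  have h : Real.sqrt (x^2 + y^2) ≤ Real.sqrt ((|x| + |y|)^2) := by
    apply Real.sqrt_le_sqrt
    nlinarith [sq_abs x, sq_abs y, abs_nonneg x, abs_nonneg y]
  rwa [Real.sqrt_sq (by positivity)] at h

/-- lower bound on the sum of the first four `θ`-derivatives of the phase
`φ(θ) = η₁cosθ + η₂sinθ + η₃cos2θ + η₄sin2θ`. -/
theorem stmt13 (θ η₁ η₂ η₃ η₄ : ℝ) :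
    |(-η₁) * Real.sin θ + η₂ * Real.cos θ - 2 * η₃ * Real.sin (2*θ) + 2 * η₄ * Real.cos (2*θ)|
    + |(-η₁) * Real.cos θ - η₂ * Real.sin θ - 4 * η₃ * Real.cos (2*θ) - 4 * η₄ * Real.sin (2*θ)|
    + |η₁ * Real.sin θ - η₂ * Real.cos θ + 8 * η₃ * Real.sin (2*θ) - 8 * η₄ * Real.cos (2*θ)|
    + |η₁ * Real.cos θ + η₂ * Real.sin θ + 16 * η₃ * Real.cos (2*θ) + 16 * η₄ * Real.sin (2*θ)|
    ≥ (2:ℝ)^(-100 : ℤ) * (Real.sqrt (η₁^2 + η₂^2) + Real.sqrt (η₃^2 + η₄^2)) := by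
  set c := Real.cos θ
  set s := Real.sin θ
  set c2 := Real.cos (2*θ)
  set s2 := Real.sin (2*θ)
  have h1 : s^2 + c^2 = 1 := Real.sin_sq_add_cos_sq θ
  have h2 : s2^2 + c2^2 = 1 := Real.sin_sq_add_cos_sq (2*θ)
  set P := η₁ * c + η₂ * s with hP
  set Q := -η₁ * s + η₂ * c with hQ
  set R := η₃ * c2 + η₄ * s2 with hR
  set S := -η₃ * s2 + η₄ * c2 with hS
  have hPQ : P^2 + Q^2 = η₁^2 + η₂^2 := by rw [hP, hQ]; nlinarith [h1]
  have hRS : R^2 + S^2 = η₃^2 + η₄^2 := by rw [hR, hS]; nlinarith [h2]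
  set D1 := (-η₁) * s + η₂ * c - 2 * η₃ * s2 + 2 * η₄ * c2 with hD1
  set D2 := (-η₁) * c - η₂ * s - 4 * η₃ * c2 - 4 * η₄ * s2 with hD2
  set D3 := η₁ * s - η₂ * c + 8 * η₃ * s2 - 8 * η₄ * c2 with hD3
  set D4 := η₁ * c + η₂ * s + 16 * η₃ * c2 + 16 * η₄ * s2 with hD4
  have e1 : D1 = Q + 2*S := by rw [hD1, hQ, hS]; ring
  have e2 : D2 = -P - 4*R := by rw [hD2, hP, hR]; ring
  have e3 : D3 = -Q - 8*S := by rw [hD3, hQ, hS]; ring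
  have e4 : D4 = P + 16*R := by rw [hD4, hP, hR]; ring
  have hQb : 3 * |Q| ≤ 4 * |D1| + |D3| := by
    have : 3 * Q = 4 * D1 + D3 := by rw [e1, e3]; ring
    calc 3 * |Q| = |4 * D1 + D3| := by rw [← this, abs_mul]; simp [abs_of_nonneg]
    _ ≤ |4 * D1| + |D3| := abs_add_le _ _
    _ = 4 * |D1| + |D3| := by rw [abs_mul]; norm_num
  have hSb : 6 * |S| ≤ |D1| + |D3| := by
    have : -6 * S = D1 + D3 := by rw [e1, e3]; ring
    calc 6 * |S| = |D1 + D3| := by rw [← this, abs_mul]; simp [abs_of_nonpos]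
    _ ≤ |D1| + |D3| := abs_add_le _ _
  have hPb : 3 * |P| ≤ 4 * |D2| + |D4| := by
    have : -3 * P = 4 * D2 + D4 := by rw [e2, e4]; ring
    calc 3 * |P| = |4 * D2 + D4| := by rw [← this, abs_mul]; simp [abs_of_nonpos]
    _ ≤ |4 * D2| + |D4| := abs_add_le _ _
    _ = 4 * |D2| + |D4| := by rw [abs_mul]; norm_num
  have hRb : 12 * |R| ≤ |D2| + |D4| := by
    have : 12 * R = D2 + D4 := by rw [e2, e4]; ring
    calc 12 * |R| = |D2 + D4| := by rw [← this, abs_mul]; simp [abs_of_nonneg]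
    _ ≤ |D2| + |D4| := abs_add_le _ _
  have hs1 : Real.sqrt (η₁^2 + η₂^2) ≤ |P| + |Q| := by
    rw [← hPQ]; exact sqrt_sq_add_sq_le P Q
  have hs2 : Real.sqrt (η₃^2 + η₄^2) ≤ |R| + |S| := by
    rw [← hRS]; exact sqrt_sq_add_sq_le R S
  have hc : (2:ℝ)^(-100 : ℤ) ≤ 1/2 := by norm_num
  have hnn : (0:ℝ) ≤ Real.sqrt (η₁^2 + η₂^2) + Real.sqrt (η₃^2 + η₄^2) := by positivity
  have key : Real.sqrt (η₁^2 + η₂^2) + Real.sqrt (η₃^2 + η₄^2)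
      ≤ 2 * (|D1| + |D2| + |D3| + |D4|) := by
    have := abs_nonneg D1; have := abs_nonneg D2
    have := abs_nonneg D3; have := abs_nonneg D4
    linarith
  rw [ge_iff_le]
  calc (2:ℝ)^(-100 : ℤ) * (Real.sqrt (η₁^2 + η₂^2) + Real.sqrt (η₃^2 + η₄^2))
      ≤ (1/2) * (Real.sqrt (η₁^2 + η₂^2) + Real.sqrt (η₃^2 + η₄^2)) :=
        mul_le_mul_of_nonneg_right hc hnn
    _ ≤ (1/2) * (2 * (|D1| + |D2| + |D3| + |D4|)) := by linarith
    _ = |D1| + |D2| + |D3| + |D4| := by ring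
end
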